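/- arXiv:2305.05031 — 6 statements merged into one kernel-verified Lean document; each statement's English description precedes it below -/
import Mathlib

section
/- Let n ≥ 1, I₁ ≥ I₂ and I₄ ≥ I₂, and let X : ZMod n → Matrix (Fin I₁) (Fin I₂) ℝ and Y : ZMod n → Matrix (Fin I₄) (Fin I₂) ℝ be third-order real tensors. Then there exist tensors U : ZMod n → Matrix (Fin I₁) (Fin I₁) ℝ and V : ZMod n → Matrix (Fin I₄) (Fin I₄) ℝ that are orthogonal under the t-product, a tensor Z : ZMod n → Matrix (Fin I₂) (Fin I₂) ℝ that is invertible under the t-product (there exists Z' with Z ∗ Z' = Z' ∗ Z = I), and f-diagonal tensors C : ZMod n → Matrix (Fin I₁) (Fin I₂) ℝ and S : ZMod n → Matrix (Fin I₄) (Fin I₂) ℝ, such that X = U ∗ C ∗ Z and Y = V ∗ S ∗ Z (generalized tensor SVD, GTSVD). -/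
/-!
The DFT along the third mode turns the t-product into slicewise matrix multiplication, the tensor
transpose into slicewise conjugate transposition and the identity tensor into identity slices, and
a family of complex slices is the transform of a real tensor exactly when slice `-k` is the
entrywise conjugate of slice `k`. So it suffices to choose, for every frequency `k`, a matrix GSVD
of the transformed slices `X̂ k, Ŷ k`, conjugate-symmetric in `k`: at a frequency with `-k = k` the
slices are real and we take a real GSVD, otherwise slice `-k` gets the conjugate of the GSVD at `k`.

A matrix GSVD comes from an invertible `W` that diagonalizes both Gram matrices `XᴴX` and `YᴴY` by
congruence: then `XW` and `YW` have orthogonal columns, so they are a unitary times a rectangular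
diagonal matrix, and `Z = W⁻¹`. Such a `W` exists for any two positive semidefinite `A`, `B`:
a first congruence turns `A + B` into a diagonal projection `J`, and then a unitary diagonalizing
`A + J` also diagonalizes `J`, hence `A` and `B = J - A`.
-/

open Matrix

variable {n : ℕ}

/-- The t-product of two third-order tensors, modeled as circular convolution
of frontal slices. -/
noncomputable def tMul [NeZero n] {a b c : ℕ}
    (X : ZMod n → Matrix (Fin a) (Fin b) ℝ) (Y : ZMod n → Matrix (Fin b) (Fin c) ℝ) :
    ZMod n → Matrix (Fin a) (Fin c) ℝ :=
  fun k => ∑ j : ZMod n, X (k - j) * Y j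

/-- The tensor transpose: transpose every frontal slice and reverse the order of
the frontal slices 2 through n. -/
def tTranspose {a b : ℕ} (X : ZMod n → Matrix (Fin a) (Fin b) ℝ) :
    ZMod n → Matrix (Fin b) (Fin a) ℝ :=
  fun k => (X (-k))ᵀ

/-- The identity tensor: the first frontal slice is the identity matrix and all
other frontal slices are zero. -/
def tId (n m : ℕ) : ZMod n → Matrix (Fin m) (Fin m) ℝ :=
  fun k => if k = 0 then 1 else 0

/-- A tensor is orthogonal if `Qᵀ ∗ Q = Q ∗ Qᵀ = I` under the t-product. -/
def tOrthogonal [NeZero n] {m : ℕ} (Q : ZMod n → Matrix (Fin m) (Fin m) ℝ) : Prop :=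
  tMul (tTranspose Q) Q = tId n m ∧ tMul Q (tTranspose Q) = tId n m

open scoped ComplexOrder

namespace Matrix

def IsRectDiag {R : Type*} [Zero R] {a b : ℕ} (C : Matrix (Fin a) (Fin b) R) : Prop :=
  ∀ (i : Fin a) (j : Fin b), (i : ℕ) ≠ (j : ℕ) → C i j = 0

lemma map_mem_unitaryGroup {R S : Type*} [CommRing R] [StarRing R] [CommRing S] [StarRing S]
    {ι : Type*} [Fintype ι] [DecidableEq ι] (f : R →+* S) (hf : ∀ x, f (star x) = star (f x))
    {U : Matrix ι ι R} (hU : U ∈ unitaryGroup ι R) : U.map f ∈ unitaryGroup ι S := by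
  rw [mem_unitaryGroup_iff', star_eq_conjTranspose, ← conjTranspose_map f hf, ← Matrix.map_mul,
    ← star_eq_conjTranspose, mem_unitaryGroup_iff'.1 hU, Matrix.map_one _ f.map_zero f.map_one]

variable {𝕜 : Type*} [RCLike 𝕜] {ι : Type*}

lemma PosSemidef.diag_eq_zero_of_add {A B : Matrix ι ι 𝕜} (hA : A.PosSemidef) (hB : B.PosSemidef)
    {i : ι} (h : A i i + B i i = 0) : A i i = 0 ∧ B i i = 0 :=
  (add_eq_zero_iff_of_nonneg hA.diag_nonneg hB.diag_nonneg).1 h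

variable [Fintype ι] [DecidableEq ι]

lemma PosSemidef.apply_eq_zero_of_diag_eq_zero {A : Matrix ι ι 𝕜} (hA : A.PosSemidef) {i : ι}
    (h : A i i = 0) (j : ι) : A j i = 0 := by
  have hcol : A *ᵥ Pi.single i 1 = 0 :=
    (hA.dotProduct_mulVec_zero_iff _).1 (by simpa [mulVec_single_one] using h)
  simpa [mulVec_single_one] using congrFun hcol j

lemma IsHermitian.conjTranspose_eigenvectorUnitary_mul_mul {A : Matrix ι ι 𝕜} (hA : A.IsHermitian) :
    (hA.eigenvectorUnitary : Matrix ι ι 𝕜)ᴴ * A * (hA.eigenvectorUnitary : Matrix ι ι 𝕜) =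
      diagonal (RCLike.ofReal ∘ hA.eigenvalues) := by
  rw [← star_eq_conjTranspose]
  simpa [Unitary.conjStarAlgAut_star_apply] using hA.conjStarAlgAut_star_eigenvectorUnitary

lemma PosSemidef.exists_isUnit_conj_eq_diagonal {M : Matrix ι ι 𝕜} (hM : M.PosSemidef) :
    ∃ W : Matrix ι ι 𝕜, IsUnit W ∧
      ∃ g : ι → 𝕜, (∀ i, g i = 0 ∨ g i = 1) ∧ Wᴴ * M * W = diagonal g := by
  obtain ⟨Q, hQ, d, hd, hQMQ⟩ : ∃ Q : Matrix ι ι 𝕜, IsUnit Q ∧ ∃ d : ι → ℝ, (∀ i, 0 ≤ d i) ∧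
      Qᴴ * M * Q = diagonal (RCLike.ofReal ∘ d) :=
    ⟨_, (Unitary.toUnits hM.1.eigenvectorUnitary).isUnit, _, hM.eigenvalues_nonneg,
      hM.1.conjTranspose_eigenvectorUnitary_mul_mul⟩
  set e : ι → ℝ := fun i => if d i = 0 then 1 else (√(d i))⁻¹
  have he : ∀ i, e i ≠ 0 := fun i => by
    by_cases h : d i = 0
    · simp [e, h]
    · simp [e, h, Real.sqrt_eq_zero (hd i)]
  set E : Matrix ι ι 𝕜 := diagonal (RCLike.ofReal ∘ e)
  have hE : Eᴴ = E := by simp [E, diagonal_conjTranspose, Pi.star_def]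
  refine ⟨Q * E, hQ.mul (isUnit_diagonal.2 (Pi.isUnit_iff.2 fun i => by simpa using he i)),
    fun i => if d i = 0 then 0 else 1, fun i => by by_cases h : d i = 0 <;> simp [h], ?_⟩
  calc (Q * E)ᴴ * M * (Q * E) = E * (Qᴴ * M * Q) * E := by
        rw [conjTranspose_mul, hE]; simp only [Matrix.mul_assoc]
    _ = _ := by
      rw [hQMQ, diagonal_mul_diagonal, diagonal_mul_diagonal]
      congr 1
      funext i
      by_cases h : d i = 0
      · simp [h]
      · simp only [Function.comp_apply, e, h, if_false, ← RCLike.ofReal_mul]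
        rw [mul_right_comm, ← mul_inv, Real.mul_self_sqrt (hd i), inv_mul_cancel₀ h,
          RCLike.ofReal_one]

lemma exists_isUnit_isDiag_conj_of_add_eq_diagonal {A B : Matrix ι ι 𝕜} (hA : A.PosSemidef)
    (hB : B.PosSemidef) {g : ι → 𝕜} (hg : ∀ i, g i = 0 ∨ g i = 1) (hAB : A + B = diagonal g) :
    ∃ P : Matrix ι ι 𝕜, IsUnit P ∧ (Pᴴ * A * P).IsDiag ∧ (Pᴴ * B * P).IsDiag := by
  set J := diagonal g
  have hJJ : J * J = J := by
    rw [diagonal_mul_diagonal]; congr 1; funext i; rcases hg i with h | h <;> simp [h]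
  have hJ : J.PosSemidef :=
    posSemidef_diagonal_iff.2 fun i => by rcases hg i with h | h <;> simp [h]
  -- `0 ≤ A ≤ J`, so `A` vanishes on the kernel of the projection `J`
  have hJA : J * A = A := by
    ext i j
    rw [diagonal_mul]
    rcases hg i with h | h
    · have hii : A i i + B i i = 0 := by simpa [h, J] using congrFun (congrFun hAB i) i
      rw [h, zero_mul, ← hA.1.apply,
        hA.apply_eq_zero_of_diag_eq_zero (hA.diag_eq_zero_of_add hB hii).1, star_zero]
    · rw [h, one_mul]
  have hH : (A + J).IsHermitian := hA.1.add hJ.1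
  obtain ⟨P, hP, d, hPHP⟩ : ∃ P : Matrix ι ι 𝕜, P * Pᴴ = 1 ∧ ∃ d : ι → ℝ,
      Pᴴ * (A + J) * P = diagonal (RCLike.ofReal ∘ d) :=
    ⟨_, mem_unitaryGroup_iff.1 hH.eigenvectorUnitary.2, _,
      hH.conjTranspose_eigenvectorUnitary_mul_mul⟩
  set D : Matrix ι ι 𝕜 := diagonal (RCLike.ofReal ∘ d)
  set K := Pᴴ * J * P
  have hL : Pᴴ * A * P = D - K := by rw [← hPHP, mul_add, add_mul, add_sub_cancel_right]
  have hKD : K * D = D := by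
    rw [← hPHP, show K * (Pᴴ * (A + J) * P) = Pᴴ * (J * (P * Pᴴ) * (A + J)) * P by
      simp only [K, Matrix.mul_assoc], hP, Matrix.mul_one, mul_add, hJA, hJJ]
  -- the eigenvectors of `A + J` are eigenvectors of `J`: those of eigenvalue `0` lie in `ker J`
  have hK : K.IsDiag := by
    intro i j hij
    by_cases hdj : d j = 0
    · have hjj : (Pᴴ * A * P) j j + K j j = 0 := by
        rw [hL]; simp [D, hdj]
      exact (hJ.conjTranspose_mul_mul_same P).apply_eq_zero_of_diag_eq_zero
        ((hA.conjTranspose_mul_mul_same P).diag_eq_zero_of_add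
          (hJ.conjTranspose_mul_mul_same P) hjj).2 i
    · simpa [D, mul_diagonal, hij, hdj] using congrFun (congrFun hKD i) j
  have hB' : Pᴴ * B * P = K - Pᴴ * A * P := by
    rw [eq_sub_of_add_eq' hAB, mul_sub, sub_mul]
  refine ⟨P, (isUnit_iff_isUnit_det P).2 (isUnit_det_of_right_inverse hP), ?_, ?_⟩
  · rw [hL]; exact (isDiag_diagonal _).sub hK
  · rw [hB', hL]; exact hK.sub ((isDiag_diagonal _).sub hK)

lemma PosSemidef.exists_isUnit_isDiag_conj {A B : Matrix ι ι 𝕜} (hA : A.PosSemidef)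
    (hB : B.PosSemidef) :
    ∃ W : Matrix ι ι 𝕜, IsUnit W ∧ (Wᴴ * A * W).IsDiag ∧ (Wᴴ * B * W).IsDiag := by
  obtain ⟨W, hW, g, hg, hWg⟩ := (hA.add hB).exists_isUnit_conj_eq_diagonal
  obtain ⟨P, hP, hPA, hPB⟩ := exists_isUnit_isDiag_conj_of_add_eq_diagonal
    (hA.conjTranspose_mul_mul_same W) (hB.conjTranspose_mul_mul_same W) hg
    (by rw [← hWg, mul_add, add_mul])
  refine ⟨W * P, hW.mul hP, ?_, ?_⟩
  · simpa only [conjTranspose_mul, Matrix.mul_assoc] using hPA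
  · simpa only [conjTranspose_mul, Matrix.mul_assoc] using hPB

lemma exists_unitary_mul_of_isDiag_conjTranspose_mul_self {κ : Type*} [Fintype κ] (e : κ ↪ ι)
    (A : Matrix ι κ 𝕜) (hA : (Aᴴ * A).IsDiag) :
    ∃ U ∈ unitaryGroup ι 𝕜, ∃ R : Matrix ι κ 𝕜, (∀ i j, i ≠ e j → R i j = 0) ∧ A = U * R := by
  set f : ι → EuclideanSpace 𝕜 ι := Function.extend e (fun j => WithLp.toLp 2 fun i => A i j) 0
  have hf : ∀ j, f (e j) = WithLp.toLp 2 fun i => A i j := fun j => e.injective.extend_apply _ _ j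
  have horth : Pairwise fun k l => inner 𝕜 (f k) (f l) = 0 := by
    intro k l hkl
    by_cases hk : ∃ j, e j = k
    swap
    · simp [f, Function.extend_apply' _ _ _ hk]
    by_cases hl : ∃ j, e j = l
    swap
    · simp [f, Function.extend_apply' _ _ _ hl]
    obtain ⟨j, rfl⟩ := hk
    obtain ⟨j', rfl⟩ := hl
    have := hA (e.injective.ne_iff.mp hkl)
    rw [hf, hf, EuclideanSpace.inner_eq_star_dotProduct, ← this, mul_apply]
    simp [dotProduct, mul_comm]
  set v : ι → EuclideanSpace 𝕜 ι := fun k => (‖f k‖⁻¹ : 𝕜) • f k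
  have hv : Orthonormal 𝕜 ({k | f k ≠ 0}.domRestrict v) :=
    ⟨fun k => norm_smul_inv_norm k.2, fun k l hkl => by
      change inner 𝕜 (v k) (v l) = 0
      simp only [v, inner_smul_left, inner_smul_right, horth (Subtype.coe_injective.ne hkl),
        mul_zero]⟩
  obtain ⟨b, hb⟩ := hv.exists_orthonormalBasis_extension_of_card_eq (by simp)
  refine ⟨_, (EuclideanSpace.basisFun ι 𝕜).toMatrix_orthonormalBasis_mem_unitary b,
    of fun i j => if i = e j then (‖f (e j)‖ : 𝕜) else 0, fun i j h => if_neg h, ?_⟩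
  ext i j
  simp only [mul_apply, of_apply, mul_ite, mul_zero, Finset.sum_ite_eq', Finset.mem_univ, if_true]
  by_cases h0 : f (e j) = 0
  · simpa [h0] using congrArg (· i) ((hf j).symm.trans h0)
  · rw [Module.Basis.toMatrix_apply, hb _ h0]
    have hn : (‖f (e j)‖ : 𝕜) ≠ 0 := by simpa using h0
    simp only [hf] at hn
    simp only [hf, v, map_smul, Finsupp.coe_smul, Pi.smul_apply,
      OrthonormalBasis.coe_toBasis_repr_apply, EuclideanSpace.basisFun_repr, smul_eq_mul]
    field_simp

end Matrix

@[ext]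
structure GSVD (R : Type*) (I₁ I₂ I₄ : ℕ) where
  U : Matrix (Fin I₁) (Fin I₁) R
  V : Matrix (Fin I₄) (Fin I₄) R
  Z : Matrix (Fin I₂) (Fin I₂) R
  Z' : Matrix (Fin I₂) (Fin I₂) R
  C : Matrix (Fin I₁) (Fin I₂) R
  S : Matrix (Fin I₄) (Fin I₂) R

namespace GSVD

variable {R S : Type*} {I₁ I₂ I₄ : ℕ}

def map (f : R → S) (d : GSVD R I₁ I₂ I₄) : GSVD S I₁ I₂ I₄ :=
  ⟨d.U.map f, d.V.map f, d.Z.map f, d.Z'.map f, d.C.map f, d.S.map f⟩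

structure IsGSVDOf [CommRing R] [StarRing R] (X : Matrix (Fin I₁) (Fin I₂) R)
    (Y : Matrix (Fin I₄) (Fin I₂) R) (d : GSVD R I₁ I₂ I₄) : Prop where
  U_mem : d.U ∈ Matrix.unitaryGroup (Fin I₁) R
  V_mem : d.V ∈ Matrix.unitaryGroup (Fin I₄) R
  Z_mul_Z' : d.Z * d.Z' = 1
  Z'_mul_Z : d.Z' * d.Z = 1
  C_isRectDiag : d.C.IsRectDiag
  S_isRectDiag : d.S.IsRectDiag
  X_eq : X = d.U * d.C * d.Z
  Y_eq : Y = d.V * d.S * d.Z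

lemma IsGSVDOf.map [CommRing R] [StarRing R] [CommRing S] [StarRing S]
    {X : Matrix (Fin I₁) (Fin I₂) R} {Y : Matrix (Fin I₄) (Fin I₂) R} {d : GSVD R I₁ I₂ I₄}
    (h : d.IsGSVDOf X Y) (f : R →+* S)
    (hf : ∀ x, f (star x) = star (f x)) : (d.map f).IsGSVDOf (X.map f) (Y.map f) where
  U_mem := Matrix.map_mem_unitaryGroup f hf h.U_mem
  V_mem := Matrix.map_mem_unitaryGroup f hf h.V_mem
  Z_mul_Z' := by
    simp only [GSVD.map]
    rw [← Matrix.map_mul, h.Z_mul_Z', Matrix.map_one _ f.map_zero f.map_one]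
  Z'_mul_Z := by
    simp only [GSVD.map]
    rw [← Matrix.map_mul, h.Z'_mul_Z, Matrix.map_one _ f.map_zero f.map_one]
  C_isRectDiag i j hij := by simp [GSVD.map, h.C_isRectDiag i j hij]
  S_isRectDiag i j hij := by simp [GSVD.map, h.S_isRectDiag i j hij]
  X_eq := by simp only [GSVD.map, h.X_eq, Matrix.map_mul]
  Y_eq := by simp only [GSVD.map, h.Y_eq, Matrix.map_mul]

lemma exists_isGSVDOf {𝕜 : Type*} [RCLike 𝕜] (h₁ : I₂ ≤ I₁) (h₄ : I₂ ≤ I₄)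
    (X : Matrix (Fin I₁) (Fin I₂) 𝕜) (Y : Matrix (Fin I₄) (Fin I₂) 𝕜) :
    ∃ d : GSVD 𝕜 I₁ I₂ I₄, d.IsGSVDOf X Y := by
  obtain ⟨W, hW, hXW, hYW⟩ := (posSemidef_conjTranspose_mul_self X).exists_isUnit_isDiag_conj
    (posSemidef_conjTranspose_mul_self Y)
  obtain ⟨U, hU, C, hC, hXC⟩ := exists_unitary_mul_of_isDiag_conjTranspose_mul_self
    (Fin.castLEEmb h₁) (X * W) (by simpa only [conjTranspose_mul, Matrix.mul_assoc] using hXW)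
  obtain ⟨V, hV, S, hS, hYS⟩ := exists_unitary_mul_of_isDiag_conjTranspose_mul_self
    (Fin.castLEEmb h₄) (Y * W) (by simpa only [conjTranspose_mul, Matrix.mul_assoc] using hYW)
  have hW' := (isUnit_iff_isUnit_det W).1 hW
  refine ⟨⟨U, V, W⁻¹, W, C, S⟩, hU, hV, nonsing_inv_mul W hW', mul_nonsing_inv W hW',
    fun i j hij => hC i j (mt Fin.val_eq_of_eq hij),
    fun i j hij => hS i j (mt Fin.val_eq_of_eq hij), ?_, ?_⟩
  · rw [← hXC, mul_nonsing_inv_cancel_right _ _ hW']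
  · rw [← hYS, mul_nonsing_inv_cancel_right _ _ hW']

lemma exists_isGSVDOf_map_conj_eq (h₁ : I₂ ≤ I₁) (h₄ : I₂ ≤ I₄) (X : Matrix (Fin I₁) (Fin I₂) ℂ)
    (Y : Matrix (Fin I₄) (Fin I₂) ℂ) :
    ∃ d : GSVD ℂ I₁ I₂ I₄, d.IsGSVDOf X Y ∧
      (X.map (starRingEnd ℂ) = X → Y.map (starRingEnd ℂ) = Y → d.map (starRingEnd ℂ) = d) := by
  by_cases hreal : X.map (starRingEnd ℂ) = X ∧ Y.map (starRingEnd ℂ) = Y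
  · have hre : ∀ {a b : ℕ} (M : Matrix (Fin a) (Fin b) ℂ), M.map (starRingEnd ℂ) = M →
        (M.map Complex.re).map Complex.ofRealHom = M := fun M hM => by
      ext i j
      simpa using Complex.conj_eq_iff_re.1 (congrFun (congrFun hM i) j)
    obtain ⟨d, hd⟩ := exists_isGSVDOf h₁ h₄ (X.map Complex.re) (Y.map Complex.re)
    refine ⟨d.map Complex.ofRealHom, ?_, fun _ _ => ?_⟩
    · simpa only [hre X hreal.1, hre Y hreal.2] using hd.map Complex.ofRealHom fun x => by simp
    · ext <;> simp [GSVD.map]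
  · obtain ⟨d, hd⟩ := exists_isGSVDOf h₁ h₄ X Y
    exact ⟨d, hd, fun hX hY => absurd ⟨hX, hY⟩ hreal⟩

end GSVD

lemma exists_neg_equivariant_choice {ι α : Type*} [InvolutiveNeg ι] (τ : α → α)
    (hτ : Function.Involutive τ) {P : ι → α → Prop} (hP : ∀ i a, P i a → P (-i) (τ a))
    (hex : ∀ i, ∃ a, P i a ∧ (-i = i → τ a = a)) :
    ∃ t : ι → α, (∀ i, P i (t i)) ∧ ∀ i, t (-i) = τ (t i) := by
  classical
  choose s hs hfix using hex
  let r : ι → ι := fun i => @Classical.epsilon ι ⟨i⟩ fun k => k = i ∨ k = -i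
  have hr : ∀ i, r i = i ∨ r i = -i := fun i =>
    Classical.epsilon_spec (p := fun k => k = i ∨ k = -i) ⟨i, Or.inl rfl⟩
  have hr_neg : ∀ i, r (-i) = r i := fun i => by
    simp only [r]
    congr 1
    funext k
    rw [neg_neg, or_comm]
  refine ⟨fun i => if r i = i then s i else τ (s (-i)), fun i => ?_, fun i => ?_⟩
  · dsimp only
    split_ifs
    · exact hs i
    · simpa using hP _ _ (hs (-i))
  · dsimp only
    by_cases hi : -i = i
    · have : r i = i := (hr i).elim id (·.trans hi)
      simp only [hi, this, if_true]
      exact (hfix i hi).symm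
    · simp only [hr_neg, neg_neg]
      rcases hr i with h | h
      · rw [if_neg (show ¬r i = -i by rw [h]; exact Ne.symm hi), if_pos h]
      · rw [if_pos h, if_neg (show ¬r i = i by rw [h]; exact hi), hτ]

open ZMod

namespace ZMod

variable [NeZero n]

lemma dft_conv {l m p : Type*} [Fintype m] (Φ : ZMod n → Matrix l m ℂ)
    (Ψ : ZMod n → Matrix m p ℂ) (k : ZMod n) :
    𝓕 (fun i => ∑ j, Φ (i - j) * Ψ j) k = 𝓕 Φ k * 𝓕 Ψ k := by
  simp only [dft_apply, Matrix.sum_mul, Matrix.mul_sum, Finset.smul_sum]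
  rw [Finset.sum_comm]
  refine Finset.sum_congr rfl fun j _ => ?_
  rw [← Equiv.sum_comp (Equiv.addRight j)]
  refine Finset.sum_congr rfl fun i _ => ?_
  rw [Equiv.coe_addRight, add_sub_cancel_right, Matrix.smul_mul, Matrix.mul_smul, smul_smul,
    ← AddChar.map_add_eq_mul, ← neg_add, ← add_mul]

lemma dft_map_conj {l m : Type*} (Φ : ZMod n → Matrix l m ℂ) (k : ZMod n) :
    (𝓕 Φ k).map (starRingEnd ℂ) = 𝓕 (fun j => (Φ j).map (starRingEnd ℂ)) (-k) := by
  ext a b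
  simp [dft_apply, Matrix.sum_apply, ← AddChar.map_neg_eq_conj]

end ZMod

section TensorDFT

variable [NeZero n]

noncomputable def tensorDFT {a b : ℕ} (X : ZMod n → Matrix (Fin a) (Fin b) ℝ) :
    ZMod n → Matrix (Fin a) (Fin b) ℂ :=
  𝓕 fun k => (X k).map (↑)

variable {a b c : ℕ}

lemma tensorDFT_injective :
    Function.Injective (tensorDFT : (ZMod n → Matrix (Fin a) (Fin b) ℝ) → _) :=
  fun _ _ h => funext fun k =>
    Matrix.map_injective Complex.ofReal_injective (congrFun (dft.injective h) k)

lemma tensorDFT_tMul (X : ZMod n → Matrix (Fin a) (Fin b) ℝ)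
    (Y : ZMod n → Matrix (Fin b) (Fin c) ℝ) (k : ZMod n) :
    tensorDFT (tMul X Y) k = tensorDFT X k * tensorDFT Y k := by
  have h : (fun i => (tMul X Y i).map ((↑) : ℝ → ℂ)) =
      fun i => ∑ j, (X (i - j)).map ((↑) : ℝ → ℂ) * (Y j).map ((↑) : ℝ → ℂ) := by
    funext i
    ext r s
    simp [tMul, Matrix.sum_apply, Matrix.mul_apply]
  unfold tensorDFT
  rw [h]
  exact dft_conv (fun k => (X k).map (↑)) (fun k => (Y k).map (↑)) k

lemma tensorDFT_tId (m : ℕ) (k : ZMod n) : tensorDFT (tId n m) k = 1 := by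
  rw [tensorDFT, dft_apply, Finset.sum_eq_single 0 (fun j _ hj => by simp [tId, hj]) (by simp)]
  simp [tId]

lemma tensorDFT_neg (X : ZMod n → Matrix (Fin a) (Fin b) ℝ) (k : ZMod n) :
    tensorDFT X (-k) = (tensorDFT X k).map (starRingEnd ℂ) := by
  rw [tensorDFT, dft_map_conj]
  simp [Matrix.map_map, Function.comp_def]

lemma tensorDFT_tTranspose (X : ZMod n → Matrix (Fin a) (Fin b) ℝ) (k : ZMod n) :
    tensorDFT (tTranspose X) k = (tensorDFT X k)ᴴ := by
  rw [show (tensorDFT X k)ᴴ = ((tensorDFT X k).map (starRingEnd ℂ))ᵀ from rfl, ← tensorDFT_neg]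
  ext i l
  simp only [tensorDFT, tTranspose, dft_apply, Matrix.sum_apply, Matrix.smul_apply, map_apply,
    transpose_apply, smul_eq_mul, mul_neg, neg_neg]
  exact Fintype.sum_equiv (Equiv.neg _) _ _ fun c => by simp

lemma exists_tensorDFT_eq (G : ZMod n → Matrix (Fin a) (Fin b) ℂ)
    (hG : ∀ k, G (-k) = (G k).map (starRingEnd ℂ)) : ∃ X, tensorDFT X = G := by
  refine ⟨fun k => (𝓕⁻ G k).map Complex.re, ?_⟩
  suffices h : ∀ k, (𝓕⁻ G k).map (starRingEnd ℂ) = 𝓕⁻ G k by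
    rw [tensorDFT, ← LinearEquiv.eq_symm_apply]
    funext k
    ext i l
    simpa [Complex.conj_eq_iff_re] using congrFun (congrFun (h k) i) l
  intro k
  have key : (𝓕 G (-k)).map (starRingEnd ℂ) = 𝓕 G (-k) := by
    rw [dft_map_conj, neg_neg]
    simp_rw [← hG]
    exact congrFun (dft_comp_neg G) k
  ext i l
  simpa [invDFT_apply'] using Or.inl (congrFun (congrFun key i) l)

lemma apply_eq_zero_of_tensorDFT_apply_eq_zero {X : ZMod n → Matrix (Fin a) (Fin b) ℝ}
    {i : Fin a} {l : Fin b} (h : ∀ k, tensorDFT X k i l = 0) (k : ZMod n) : X k i l = 0 := by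
  have h' : 𝓕 (fun j => (X j i l : ℂ)) = 0 :=
    funext fun k => by simpa [tensorDFT, dft_apply, Matrix.sum_apply] using h k
  simpa using congrFun ((map_eq_zero_iff _ dft.injective).1 h') k

lemma eq_tMul_of_tensorDFT {W : ZMod n → Matrix (Fin a) (Fin c) ℝ}
    {X : ZMod n → Matrix (Fin a) (Fin b) ℝ} {Y : ZMod n → Matrix (Fin b) (Fin c) ℝ}
    (h : ∀ k, tensorDFT W k = tensorDFT X k * tensorDFT Y k) : W = tMul X Y :=
  tensorDFT_injective (funext fun k => (h k).trans (tensorDFT_tMul X Y k).symm)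

lemma tMul_eq_tId_of_tensorDFT {m : ℕ} {X Y : ZMod n → Matrix (Fin m) (Fin m) ℝ}
    (h : ∀ k, tensorDFT X k * tensorDFT Y k = 1) : tMul X Y = tId n m :=
  (eq_tMul_of_tensorDFT fun k => (tensorDFT_tId m k).trans (h k).symm).symm

lemma tOrthogonal_of_tensorDFT_mem_unitaryGroup {m : ℕ} {Q : ZMod n → Matrix (Fin m) (Fin m) ℝ}
    (h : ∀ k, tensorDFT Q k ∈ unitaryGroup (Fin m) ℂ) : tOrthogonal Q :=
  ⟨tMul_eq_tId_of_tensorDFT fun k => by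
      rw [tensorDFT_tTranspose]; exact mem_unitaryGroup_iff'.1 (h k),
    tMul_eq_tId_of_tensorDFT fun k => by
      rw [tensorDFT_tTranspose]; exact mem_unitaryGroup_iff.1 (h k)⟩

lemma isRectDiag_of_tensorDFT {C : ZMod n → Matrix (Fin a) (Fin b) ℝ}
    (h : ∀ k, (tensorDFT C k).IsRectDiag) (k : ZMod n) : (C k).IsRectDiag :=
  fun i j hij => apply_eq_zero_of_tensorDFT_apply_eq_zero (fun k => h k i j hij) k

lemma exists_isGSVDOf_tensorDFT {I₁ I₂ I₄ : ℕ} (h₁ : I₂ ≤ I₁) (h₄ : I₂ ≤ I₄)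
    (X : ZMod n → Matrix (Fin I₁) (Fin I₂) ℝ) (Y : ZMod n → Matrix (Fin I₄) (Fin I₂) ℝ) :
    ∃ D : ZMod n → GSVD ℂ I₁ I₂ I₄, (∀ k, (D k).IsGSVDOf (tensorDFT X k) (tensorDFT Y k)) ∧
      ∀ k, D (-k) = (D k).map (starRingEnd ℂ) :=
  exists_neg_equivariant_choice (GSVD.map (starRingEnd ℂ)) (fun d => by ext <;> simp [GSVD.map])
    (fun k d hd => by simpa only [tensorDFT_neg] using hd.map (starRingEnd ℂ) fun _ => rfl)
    fun k => (GSVD.exists_isGSVDOf_map_conj_eq h₁ h₄ _ _).imp fun d hd =>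
      ⟨hd.1, fun hk => hd.2 (by rw [← tensorDFT_neg, hk]) (by rw [← tensorDFT_neg, hk])⟩

end TensorDFT

/-- Existence of the generalized tensor SVD (GTSVD) based on the t-product. -/
theorem gtsvd_exists (n I₁ I₂ I₄ : ℕ) [NeZero n] (h₁ : I₂ ≤ I₁) (h₄ : I₂ ≤ I₄)
    (X : ZMod n → Matrix (Fin I₁) (Fin I₂) ℝ)
    (Y : ZMod n → Matrix (Fin I₄) (Fin I₂) ℝ) :
    ∃ (U : ZMod n → Matrix (Fin I₁) (Fin I₁) ℝ)
      (V : ZMod n → Matrix (Fin I₄) (Fin I₄) ℝ)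
      (Z : ZMod n → Matrix (Fin I₂) (Fin I₂) ℝ)
      (C : ZMod n → Matrix (Fin I₁) (Fin I₂) ℝ)
      (S : ZMod n → Matrix (Fin I₄) (Fin I₂) ℝ),
      tOrthogonal U ∧ tOrthogonal V ∧
      (∃ Z' : ZMod n → Matrix (Fin I₂) (Fin I₂) ℝ,
        tMul Z Z' = tId n I₂ ∧ tMul Z' Z = tId n I₂) ∧
      (∀ (k : ZMod n) (i : Fin I₁) (j : Fin I₂), (i : ℕ) ≠ (j : ℕ) → C k i j = 0) ∧
      (∀ (k : ZMod n) (i : Fin I₄) (j : Fin I₂), (i : ℕ) ≠ (j : ℕ) → S k i j = 0) ∧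
      X = tMul (tMul U C) Z ∧ Y = tMul (tMul V S) Z := by
  obtain ⟨D, hD, hD_neg⟩ := exists_isGSVDOf_tensorDFT h₁ h₄ X Y
  obtain ⟨U, hU⟩ := exists_tensorDFT_eq (fun k => (D k).U) fun k => congrArg GSVD.U (hD_neg k)
  obtain ⟨V, hV⟩ := exists_tensorDFT_eq (fun k => (D k).V) fun k => congrArg GSVD.V (hD_neg k)
  obtain ⟨Z, hZ⟩ := exists_tensorDFT_eq (fun k => (D k).Z) fun k => congrArg GSVD.Z (hD_neg k)
  obtain ⟨Z', hZ'⟩ := exists_tensorDFT_eq (fun k => (D k).Z') fun k => congrArg GSVD.Z' (hD_neg k)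
  obtain ⟨C, hC⟩ := exists_tensorDFT_eq (fun k => (D k).C) fun k => congrArg GSVD.C (hD_neg k)
  obtain ⟨S, hS⟩ := exists_tensorDFT_eq (fun k => (D k).S) fun k => congrArg GSVD.S (hD_neg k)
  refine ⟨U, V, Z, C, S, ?_, ?_, ⟨Z', ?_, ?_⟩, isRectDiag_of_tensorDFT ?_,
    isRectDiag_of_tensorDFT ?_, eq_tMul_of_tensorDFT fun k => ?_, eq_tMul_of_tensorDFT fun k => ?_⟩
  · exact tOrthogonal_of_tensorDFT_mem_unitaryGroup fun k => hU ▸ (hD k).U_mem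
  · exact tOrthogonal_of_tensorDFT_mem_unitaryGroup fun k => hV ▸ (hD k).V_mem
  · exact tMul_eq_tId_of_tensorDFT fun k => hZ ▸ hZ' ▸ (hD k).Z_mul_Z'
  · exact tMul_eq_tId_of_tensorDFT fun k => hZ ▸ hZ' ▸ (hD k).Z'_mul_Z
  · exact fun k => hC ▸ (hD k).C_isRectDiag
  · exact fun k => hS ▸ (hD k).S_isRectDiag
  · rw [tensorDFT_tMul, hU, hC, hZ]; exact (hD k).X_eq
  · rw [tensorDFT_tMul, hV, hS, hZ]; exact (hD k).Y_eq
end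

section
/- Let n ≥ 1 and let X : ZMod n → Matrix (Fin I₁) (Fin I₂) ℝ be a third-order real tensor. Then there exist a tensor Q : ZMod n → Matrix (Fin I₁) (Fin I₁) ℝ orthogonal under the t-product and a tensor R : ZMod n → Matrix (Fin I₁) (Fin I₂) ℝ each of whose frontal slices is upper triangular (i.e. (R k) i j = 0 whenever (i : ℕ) > (j : ℕ)) such that X = Q ∗ R (existence of the tensor QR decomposition, t-QR). -/
open Matrix

variable {n : ℕ}

/-! The slice-wise DFT of the complexified tensor turns the t-product into the product of
corresponding slices, the tensor transpose into the conjugate transpose and the identity tensor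
into identity matrices, and it maps the real tensors exactly onto the families `Â` with
`Â (-f) = conj (Â f)`. So it suffices to take a QR decomposition `Â f = U f * T f` of every
Fourier slice with `U (-f) = conj (U f)` and `T (-f) = conj (T f)`: a real QR decomposition on
the self-conjugate slices, and on each remaining pair `{f, -f}` a QR decomposition of one slice
together with its conjugate for the other. Transforming back gives `Q` and `R`. -/

open ZMod ComplexConjugate

def Matrix.IsUpperTrapezoidal {R : Type*} [Zero R] {a b : ℕ} (M : Matrix (Fin a) (Fin b) R) :
    Prop :=
  ∀ (i : Fin a) (j : Fin b), (j : ℕ) < i → M i j = 0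

theorem Matrix.exists_mem_unitaryGroup_mul_isUpperTrapezoidal {𝕜 : Type*} [RCLike 𝕜] {a b : ℕ}
    (A : Matrix (Fin a) (Fin b) 𝕜) :
    ∃ Q ∈ unitaryGroup (Fin a) 𝕜, ∃ R : Matrix (Fin a) (Fin b) 𝕜,
      R.IsUpperTrapezoidal ∧ A = Q * R := by
  classical
  -- `R := Qᴴ * A` works for every unitary `Q`; Gram–Schmidt on the first `a` columns of `A`
  -- (padded by zero columns) makes it upper trapezoidal.
  let v : Fin a → EuclideanSpace 𝕜 (Fin a) := fun i =>
    if h : (i : ℕ) < b then WithLp.toLp 2 (fun r => A r ⟨i, h⟩) else 0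
  have hdim : Module.finrank 𝕜 (EuclideanSpace 𝕜 (Fin a)) = Fintype.card (Fin a) := by simp
  let q := InnerProductSpace.gramSchmidtOrthonormalBasis hdim v
  let Q := (EuclideanSpace.basisFun (Fin a) 𝕜).toBasis.toMatrix q
  have hQ : Q ∈ unitaryGroup (Fin a) 𝕜 :=
    (EuclideanSpace.basisFun _ _).toMatrix_orthonormalBasis_mem_unitary q
  refine ⟨Q, hQ, star Q * A, fun i j hji => ?_, ?_⟩
  · have := InnerProductSpace.gramSchmidtOrthonormalBasis_inv_triangular hdim v
      (i := ⟨j, hji.trans i.isLt⟩) hji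
    simpa [v, Q, q, PiLp.inner_apply, Matrix.mul_apply, Module.Basis.toMatrix_apply, mul_comm]
      using this
  · rw [← Matrix.mul_assoc, mem_unitaryGroup_iff.mp hQ, Matrix.one_mul]

theorem Matrix.map_mem_unitaryGroup_s4 {α β : Type*} [CommRing α] [StarRing α] [CommRing β]
    [StarRing β] {m : Type*} [Fintype m] [DecidableEq m] (f : α →+* β)
    (hf : ∀ x, f (star x) = star (f x)) {Q : Matrix m m α} (hQ : Q ∈ unitaryGroup m α) :
    Q.map f ∈ unitaryGroup m β := by
  rw [mem_unitaryGroup_iff] at hQ ⊢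
  rw [star_eq_conjTranspose, ← conjTranspose_map f hf, ← Matrix.map_mul, ← star_eq_conjTranspose,
    hQ, Matrix.map_one f f.map_zero f.map_one]

theorem Matrix.exists_qr_conj_invariant {a b : ℕ} (M : Matrix (Fin a) (Fin b) ℂ) :
    ∃ Q ∈ unitaryGroup (Fin a) ℂ, ∃ R : Matrix (Fin a) (Fin b) ℂ, R.IsUpperTrapezoidal ∧
      M = Q * R ∧ (M.map conj = M → Q.map conj = Q ∧ R.map conj = R) := by
  by_cases hM : M.map conj = M
  · obtain ⟨Q, hQ, R, hR, hQR⟩ := exists_mem_unitaryGroup_mul_isUpperTrapezoidal (M.map Complex.re)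
    refine ⟨Q.map Complex.ofRealHom,
      map_mem_unitaryGroup_s4 _ (fun x => (Complex.conj_ofReal x).symm) hQ, R.map Complex.ofRealHom,
      fun i j hji => by simp [hR i j hji], ?_, fun _ => ⟨?_, ?_⟩⟩
    · rw [← Matrix.map_mul, ← hQR]
      ext i j
      simpa using (Complex.conj_eq_iff_re.mp (congrFun (congrFun hM i) j)).symm
    all_goals ext; simp
  · obtain ⟨Q, hQ, R, hR, hQR⟩ := exists_mem_unitaryGroup_mul_isUpperTrapezoidal M
    exact ⟨Q, hQ, R, hR, hQR, fun h => absurd h hM⟩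

section ConjSymmetrize

variable {ι : Type*} [LinearOrder ι] {σ : ι → ι} {m l : Type*}

/-- The order only serves to pick one index from each orbit `{f, σ f}`. -/
def conjSymmetrize (σ : ι → ι) (Q : ι → Matrix m l ℂ) : ι → Matrix m l ℂ :=
  fun f => if f ≤ σ f then Q f else (Q (σ f)).map conj

theorem conjSymmetrize_apply_of_le {Q : ι → Matrix m l ℂ} {f : ι} (hf : f ≤ σ f) :
    conjSymmetrize σ Q f = Q f :=
  if_pos hf

theorem conjSymmetrize_apply_of_not_le {Q : ι → Matrix m l ℂ} {f : ι} (hf : ¬f ≤ σ f) :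
    conjSymmetrize σ Q f = (Q (σ f)).map conj :=
  if_neg hf

theorem conjSymmetrize_comp (hσ : Function.Involutive σ) {Q : ι → Matrix m l ℂ}
    (hfix : ∀ f, σ f = f → (Q f).map conj = Q f) (f : ι) :
    conjSymmetrize σ Q (σ f) = (conjSymmetrize σ Q f).map conj := by
  unfold conjSymmetrize
  rcases lt_trichotomy f (σ f) with h | h | h
  · rw [if_neg (by rwa [hσ f, not_le]), if_pos h.le, hσ f]
  · rw [← h, if_pos le_rfl, hfix f h.symm, if_pos h.le]
  · rw [if_pos (by rw [hσ f]; exact h.le), if_neg (not_le.mpr h)]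
    ext; simp

end ConjSymmetrize

theorem Matrix.exists_conj_equivariant_qr {ι : Type*} {σ : ι → ι}
    (hσ : Function.Involutive σ) {a b : ℕ} (A : ι → Matrix (Fin a) (Fin b) ℂ)
    (hA : ∀ f, A (σ f) = (A f).map conj) :
    ∃ (U : ι → Matrix (Fin a) (Fin a) ℂ) (T : ι → Matrix (Fin a) (Fin b) ℂ),
      (∀ f, U (σ f) = (U f).map conj) ∧ (∀ f, T (σ f) = (T f).map conj) ∧
      ∀ f, U f ∈ unitaryGroup (Fin a) ℂ ∧ (T f).IsUpperTrapezoidal ∧ A f = U f * T f := by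
  let _ : LinearOrder ι := WellOrderingRel.isWellOrder.linearOrder
  choose Q hQ R hR hQR hreal using fun f => exists_qr_conj_invariant (A f)
  have hfix f (hf : σ f = f) : (A f).map conj = A f := by rw [← hA, hf]
  refine ⟨conjSymmetrize σ Q, conjSymmetrize σ R,
    conjSymmetrize_comp hσ fun f hf => (hreal f (hfix f hf)).1,
    conjSymmetrize_comp hσ fun f hf => (hreal f (hfix f hf)).2, fun f => ?_⟩
  by_cases hf : f ≤ σ f
  · rw [conjSymmetrize_apply_of_le hf, conjSymmetrize_apply_of_le hf]
    exact ⟨hQ f, hR f, hQR f⟩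
  rw [conjSymmetrize_apply_of_not_le hf, conjSymmetrize_apply_of_not_le hf]
  refine ⟨map_mem_unitaryGroup_s4 _ (fun x => rfl) (hQ (σ f)), fun i j hji => ?_, ?_⟩
  · simp [hR (σ f) i j hji]
  · rw [← Matrix.map_mul, ← hQR, ← hA, hσ f]

namespace ZMod

variable {N : ℕ} [NeZero N]

theorem conj_dft (Φ : ZMod N → ℂ) (k : ZMod N) :
    conj (𝓕 Φ k) = 𝓕 (fun j => conj (Φ j)) (-k) := by
  simp [dft_apply, map_sum, ← AddChar.map_neg_eq_conj]

theorem forall_conj_eq_iff_dft_neg (Φ : ZMod N → ℂ) :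
    (∀ j, conj (Φ j) = Φ j) ↔ ∀ k, 𝓕 Φ (-k) = conj (𝓕 Φ k) := by
  refine ⟨fun h k => by simp [conj_dft, h], fun h => ?_⟩
  have : 𝓕 (fun j => conj (Φ j)) = 𝓕 Φ := funext fun k => by
    rw [← neg_neg k, ← conj_dft, h, neg_neg, Complex.conj_conj]
  exact congrFun (dft.injective this)

theorem dft_matrix_apply {l m : Type*} (X : ZMod N → Matrix l m ℂ) (k : ZMod N) (i : l) (j : m) :
    𝓕 X k i j = 𝓕 (fun t => X t i j) k := by
  simp [dft_apply, Matrix.sum_apply]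

theorem dft_matrix_conv {l m o : Type*} [Fintype m] (X : ZMod N → Matrix l m ℂ)
    (Y : ZMod N → Matrix m o ℂ) (k : ZMod N) :
    𝓕 (fun t => ∑ j, X (t - j) * Y j) k = 𝓕 X k * 𝓕 Y k := by
  simp only [dft_apply, Matrix.sum_mul, Matrix.mul_sum, Finset.smul_sum, Matrix.smul_mul,
    Matrix.mul_smul, smul_smul]
  rw [Finset.sum_comm]
  refine Finset.sum_congr rfl fun j _ => ?_
  rw [← Equiv.sum_comp (Equiv.addRight j)]
  refine Finset.sum_congr rfl fun i _ => ?_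
  rw [Equiv.coe_addRight, add_sub_cancel_right, ← AddChar.map_add_eq_mul, add_mul, neg_add,
    add_comm]

end ZMod

section TFourier

variable [NeZero n] {a b c : ℕ}

noncomputable def tFourier (X : ZMod n → Matrix (Fin a) (Fin b) ℝ) :
    ZMod n → Matrix (Fin a) (Fin b) ℂ :=
  𝓕 fun k => (X k).map Complex.ofReal

theorem tFourier_apply_apply (X : ZMod n → Matrix (Fin a) (Fin b) ℝ) (f : ZMod n) (i : Fin a)
    (j : Fin b) : tFourier X f i j = 𝓕 (fun k => (X k i j : ℂ)) f :=
  dft_matrix_apply _ f i j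

theorem tFourier_injective : Function.Injective (tFourier (n := n) (a := a) (b := b)) := by
  intro X Y h
  funext k; ext i j
  have : 𝓕 (fun k => (X k i j : ℂ)) = 𝓕 (fun k => (Y k i j : ℂ)) := funext fun f => by
    rw [← tFourier_apply_apply, ← tFourier_apply_apply, h]
  exact_mod_cast congrFun (dft.injective this) k

theorem tFourier_neg (X : ZMod n → Matrix (Fin a) (Fin b) ℝ) (f : ZMod n) :
    tFourier X (-f) = (tFourier X f).map conj := by
  ext i j
  simp only [tFourier_apply_apply, map_apply]
  exact (forall_conj_eq_iff_dft_neg _).mp (fun k => Complex.conj_ofReal _) f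

theorem exists_tFourier_eq (A : ZMod n → Matrix (Fin a) (Fin b) ℂ)
    (hA : ∀ f, A (-f) = (A f).map conj) : ∃ X, tFourier X = A := by
  have hreal i j k : conj (𝓕⁻ (fun f => A f i j) k) = 𝓕⁻ (fun f => A f i j) k := by
    refine (forall_conj_eq_iff_dft_neg _).mpr (fun f => ?_) k
    simp [hA]
  refine ⟨fun k => of fun i j => (𝓕⁻ (fun f => A f i j) k).re, ?_⟩
  funext f; ext i j
  simp [tFourier_apply_apply, Complex.conj_eq_iff_re.mp (hreal i j _)]

theorem tFourier_tMul (X : ZMod n → Matrix (Fin a) (Fin b) ℝ)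
    (Y : ZMod n → Matrix (Fin b) (Fin c) ℝ) (f : ZMod n) :
    tFourier (tMul X Y) f = tFourier X f * tFourier Y f := by
  have : (fun k => (tMul X Y k).map Complex.ofReal) =
      fun k => ∑ j, (X (k - j)).map Complex.ofReal * (Y j).map Complex.ofReal := by
    funext k; ext i l
    simp [tMul, Matrix.sum_apply, Matrix.mul_apply]
  rw [tFourier, tFourier, tFourier, this]
  exact dft_matrix_conv (fun k => (X k).map Complex.ofReal) (fun k => (Y k).map Complex.ofReal) f

theorem tFourier_tTranspose (X : ZMod n → Matrix (Fin a) (Fin b) ℝ) (f : ZMod n) :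
    tFourier (tTranspose X) f = (tFourier X f)ᴴ := by
  ext i j
  rw [conjTranspose_apply, tFourier_apply_apply, tFourier_apply_apply, RCLike.star_def,
    ← (forall_conj_eq_iff_dft_neg _).mp (fun k => Complex.conj_ofReal _)]
  exact congrFun (dft_comp_neg (fun k => (X k j i : ℂ))) f

theorem tFourier_tId (m : ℕ) (f : ZMod n) : tFourier (tId n m) f = 1 := by
  ext i j
  rw [tFourier_apply_apply, dft_apply, Finset.sum_eq_single 0 (fun k _ hk => by simp [tId, hk])
    (by simp)]
  simp [tId, one_apply, apply_ite Complex.ofReal]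

theorem isUpperTrapezoidal_of_tFourier {X : ZMod n → Matrix (Fin a) (Fin b) ℝ}
    (hX : ∀ f, (tFourier X f).IsUpperTrapezoidal) (k : ZMod n) : (X k).IsUpperTrapezoidal := by
  intro i j hji
  have : 𝓕 (fun k => (X k i j : ℂ)) = 0 := funext fun f => by
    rw [← tFourier_apply_apply]; exact hX f i j hji
  simpa using congrFun (dft.map_eq_zero_iff.mp this) k

end TFourier

/-- Existence of the tensor QR decomposition (t-QR): every third-order tensor
factors as `Q ∗ R` with `Q` orthogonal and every frontal slice of `R`
upper triangular. -/
theorem tqr_exists (n I₁ I₂ : ℕ) [NeZero n]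
    (X : ZMod n → Matrix (Fin I₁) (Fin I₂) ℝ) :
    ∃ (Q : ZMod n → Matrix (Fin I₁) (Fin I₁) ℝ)
      (R : ZMod n → Matrix (Fin I₁) (Fin I₂) ℝ),
      tOrthogonal Q ∧
      (∀ (k : ZMod n) (i : Fin I₁) (j : Fin I₂), (j : ℕ) < (i : ℕ) → R k i j = 0) ∧
      X = tMul Q R := by
  obtain ⟨U, T, hU, hT, hUT⟩ :=
    exists_conj_equivariant_qr neg_involutive (tFourier X) (tFourier_neg X)
  obtain ⟨Q, rfl⟩ := exists_tFourier_eq U hU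
  obtain ⟨R, rfl⟩ := exists_tFourier_eq T hT
  refine ⟨Q, R, ⟨?_, ?_⟩, isUpperTrapezoidal_of_tFourier fun f => (hUT f).2.1, ?_⟩ <;>
    refine tFourier_injective (funext fun f => ?_)
  · rw [tFourier_tMul, tFourier_tTranspose, tFourier_tId]
    exact mem_unitaryGroup_iff'.mp (hUT f).1
  · rw [tFourier_tMul, tFourier_tTranspose, tFourier_tId]
    exact mem_unitaryGroup_iff.mp (hUT f).1
  · rw [tFourier_tMul]
    exact (hUT f).2.2
end

section
/- The t-product is associative: for tensors X : ZMod n → Matrix (Fin I₁) (Fin I₂) ℝ, Y : ZMod n → Matrix (Fin I₂) (Fin I₃) ℝ and W : ZMod n → Matrix (Fin I₃) (Fin I₄) ℝ, one has (X ∗ Y) ∗ W = X ∗ (Y ∗ W). -/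
open Matrix

variable {n : ℕ}

/-- The t-product is associative. -/
theorem tMul_assoc (n I₁ I₂ I₃ I₄ : ℕ) [NeZero n]
    (X : ZMod n → Matrix (Fin I₁) (Fin I₂) ℝ)
    (Y : ZMod n → Matrix (Fin I₂) (Fin I₃) ℝ)
    (W : ZMod n → Matrix (Fin I₃) (Fin I₄) ℝ) :
    tMul (tMul X Y) W = tMul X (tMul Y W) := by
  funext k
  simp only [tMul, Matrix.sum_mul, Matrix.mul_sum]
  conv_rhs => rw [Finset.sum_comm]
  refine Finset.sum_congr rfl fun t _ => ?_
  rw [← Equiv.sum_comp (Equiv.subRight t)]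
  refine Finset.sum_congr rfl fun j _ => ?_
  simp [Matrix.mul_assoc, sub_sub, add_comm]
end

section
/- Uniqueness of the tensor Moore–Penrose pseudoinverse: let X : ZMod n → Matrix (Fin I₁) (Fin I₂) ℝ, and suppose P, Q : ZMod n → Matrix (Fin I₂) (Fin I₁) ℝ both satisfy the four Penrose equations under the t-product, namely X ∗ P ∗ X = X, P ∗ X ∗ P = P, (X ∗ P)ᵀ = X ∗ P, (P ∗ X)ᵀ = P ∗ X (and the same four equations with P replaced by Q). Then P = Q. -/
open Matrix

variable {n : ℕ}

lemma tMul_assoc_s8 [NeZero n] {a b c d : ℕ}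
    (X : ZMod n → Matrix (Fin a) (Fin b) ℝ) (Y : ZMod n → Matrix (Fin b) (Fin c) ℝ)
    (Z : ZMod n → Matrix (Fin c) (Fin d) ℝ) :
    tMul (tMul X Y) Z = tMul X (tMul Y Z) := by
  funext k
  simp only [tMul, Matrix.sum_mul, Matrix.mul_sum]
  conv_rhs => rw [Finset.sum_comm]
  refine Finset.sum_congr rfl fun j _ => ?_
  rw [← Equiv.sum_comp (Equiv.addRight j) fun i => X (k - i) * (Y (i - j) * Z j)]
  refine Finset.sum_congr rfl fun i _ => ?_
  have h1 : k - j - i = k - (i + j) := by ring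
  simp [Equiv.coe_addRight, add_sub_cancel_right, h1, Matrix.mul_assoc]

lemma tTranspose_tMul [NeZero n] {a b c : ℕ}
    (X : ZMod n → Matrix (Fin a) (Fin b) ℝ) (Y : ZMod n → Matrix (Fin b) (Fin c) ℝ) :
    tTranspose (tMul X Y) = tMul (tTranspose Y) (tTranspose X) := by
  funext k
  simp only [tTranspose, tMul, Matrix.transpose_sum, Matrix.transpose_mul]
  conv_rhs => rw [← Equiv.sum_comp (Equiv.addRight k) fun j => (Y (-(k - j)))ᵀ * (X (-j))ᵀ]
  refine Finset.sum_congr rfl fun j _ => ?_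
  have h1 : -(k - Equiv.addRight k j) = j := by simp [Equiv.addRight]
  have h2 : -k - j = -(Equiv.addRight k j) := by simp [Equiv.addRight]; ring
  rw [h1, h2]

/-- Uniqueness of the tensor Moore–Penrose pseudoinverse under the t-product. -/
theorem tMoorePenrose_unique (n I₁ I₂ : ℕ) [NeZero n]
    (X : ZMod n → Matrix (Fin I₁) (Fin I₂) ℝ)
    (P Q : ZMod n → Matrix (Fin I₂) (Fin I₁) ℝ)
    (hP₁ : tMul (tMul X P) X = X) (hP₂ : tMul (tMul P X) P = P)
    (hP₃ : tTranspose (tMul X P) = tMul X P)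
    (hP₄ : tTranspose (tMul P X) = tMul P X)
    (hQ₁ : tMul (tMul X Q) X = X) (hQ₂ : tMul (tMul Q X) Q = Q)
    (hQ₃ : tTranspose (tMul X Q) = tMul X Q)
    (hQ₄ : tTranspose (tMul Q X) = tMul Q X) :
    P = Q := by
  have hPXQ : P = tMul (tMul P X) Q := by
    calc P = tMul (tMul P X) P := hP₂.symm
    _ = tMul P (tMul X P) := tMul_assoc_s8 P X P
    _ = tMul P (tTranspose (tMul X P)) := by rw [hP₃]
    _ = tMul P (tMul (tTranspose P) (tTranspose X)) := by rw [tTranspose_tMul X P]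
    _ = tMul P (tMul (tTranspose P) (tTranspose (tMul (tMul X Q) X))) := by rw [hQ₁]
    _ = tMul P (tMul (tTranspose P) (tMul (tTranspose X) (tTranspose (tMul X Q)))) := by
        rw [tTranspose_tMul (tMul X Q) X]
    _ = tMul P (tMul (tTranspose P) (tMul (tTranspose X) (tMul X Q))) := by rw [hQ₃]
    _ = tMul P (tMul (tMul (tTranspose P) (tTranspose X)) (tMul X Q)) := by
        rw [tMul_assoc_s8 (tTranspose P) (tTranspose X) (tMul X Q)]
    _ = tMul P (tMul (tTranspose (tMul X P)) (tMul X Q)) := by rw [tTranspose_tMul X P]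
    _ = tMul P (tMul (tMul X P) (tMul X Q)) := by rw [hP₃]
    _ = tMul P (tMul X (tMul P (tMul X Q))) := by rw [tMul_assoc_s8 X P (tMul X Q)]
    _ = tMul (tMul P X) (tMul P (tMul X Q)) := (tMul_assoc_s8 P X (tMul P (tMul X Q))).symm
    _ = tMul (tMul (tMul P X) P) (tMul X Q) := (tMul_assoc_s8 (tMul P X) P (tMul X Q)).symm
    _ = tMul P (tMul X Q) := by rw [hP₂]
    _ = tMul (tMul P X) Q := (tMul_assoc_s8 P X Q).symm
  have hQXQ : Q = tMul (tMul P X) Q := by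
    calc Q = tMul (tMul Q X) Q := hQ₂.symm
    _ = tMul (tTranspose (tMul Q X)) Q := by rw [hQ₄]
    _ = tMul (tMul (tTranspose X) (tTranspose Q)) Q := by rw [tTranspose_tMul Q X]
    _ = tMul (tMul (tTranspose (tMul (tMul X P) X)) (tTranspose Q)) Q := by rw [hP₁]
    _ = tMul (tMul (tMul (tTranspose X) (tTranspose (tMul X P))) (tTranspose Q)) Q := by
        rw [tTranspose_tMul (tMul X P) X]
    _ = tMul (tMul (tMul (tTranspose X) (tMul (tTranspose P) (tTranspose X))) (tTranspose Q)) Q := by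
        rw [tTranspose_tMul X P]
    _ = tMul (tMul (tMul (tMul (tTranspose X) (tTranspose P)) (tTranspose X)) (tTranspose Q)) Q := by
        rw [tMul_assoc_s8 (tTranspose X) (tTranspose P) (tTranspose X)]
    _ = tMul (tMul (tMul (tTranspose (tMul P X)) (tTranspose X)) (tTranspose Q)) Q := by
        rw [tTranspose_tMul P X]
    _ = tMul (tMul (tMul (tMul P X) (tTranspose X)) (tTranspose Q)) Q := by rw [hP₄]
    _ = tMul (tMul (tMul P X) (tMul (tTranspose X) (tTranspose Q))) Q := by
        rw [tMul_assoc_s8 (tMul P X) (tTranspose X) (tTranspose Q)]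
    _ = tMul (tMul (tMul P X) (tTranspose (tMul Q X))) Q := by rw [tTranspose_tMul Q X]
    _ = tMul (tMul (tMul P X) (tMul Q X)) Q := by rw [hQ₄]
    _ = tMul (tMul P X) (tMul (tMul Q X) Q) := tMul_assoc_s8 (tMul P X) (tMul Q X) Q
    _ = tMul (tMul P X) Q := by rw [hQ₂]
  exact hPXQ.trans hQXQ.symm
end

section
/- Existence of the tensor Moore–Penrose pseudoinverse: for every tensor X : ZMod n → Matrix (Fin I₁) (Fin I₂) ℝ (n ≥ 1) there exists a tensor P : ZMod n → Matrix (Fin I₂) (Fin I₁) ℝ satisfying the four Penrose equations under the t-product: X ∗ P ∗ X = X, P ∗ X ∗ P = P, (X ∗ P)ᵀ = X ∗ P, and (P ∗ X)ᵀ = P ∗ X. -/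
/-!
The block-circulant matrix `blockCirculant X` turns the t-product into matrix multiplication and
the tensor transpose into the matrix transpose, so it suffices to find a Moore–Penrose inverse of
`blockCirculant X` that is again block circulant. Moore–Penrose inverses of matrices exist
(`A⁺ = (Aᴴ A)⁺ Aᴴ`, the pseudoinverse of the Hermitian matrix `Aᴴ A` being read off its spectral
decomposition) and are unique. By uniqueness, `A⁺` inherits every symmetry `A.submatrix e f = A`
of `A`; for a block-circulant `A` these include the cyclic shifts of the block index, and a matrix
invariant under all of them is block circulant.
-/

open Matrix

variable {n : ℕ}

namespace Matrix

variable {m n m' n' R : Type*} [Fintype m] [Fintype n]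

structure IsMoorePenroseInverse [Semiring R] [StarRing R] (A : Matrix m n R) (B : Matrix n m R) :
    Prop where
  mul_mul_self : A * B * A = A
  mul_self_mul : B * A * B = B
  isHermitian_mul : (A * B).IsHermitian
  isHermitian_mul' : (B * A).IsHermitian

namespace IsMoorePenroseInverse

section Semiring

variable [Semiring R] [StarRing R] {A : Matrix m n R} {B C : Matrix n m R}

theorem conjTranspose (h : IsMoorePenroseInverse A B) : IsMoorePenroseInverse Aᴴ Bᴴ := by
  have hAB : Aᴴ * Bᴴ = B * A := by rw [← conjTranspose_mul, h.isHermitian_mul'.eq]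
  have hBA : Bᴴ * Aᴴ = A * B := by rw [← conjTranspose_mul, h.isHermitian_mul.eq]
  refine ⟨?_, ?_, ?_, ?_⟩
  · simpa only [conjTranspose_mul, Matrix.mul_assoc] using
      congrArg Matrix.conjTranspose h.mul_mul_self
  · simpa only [conjTranspose_mul, Matrix.mul_assoc] using
      congrArg Matrix.conjTranspose h.mul_self_mul
  · rw [hAB]; exact h.isHermitian_mul'
  · rw [hBA]; exact h.isHermitian_mul

theorem unique (hB : IsMoorePenroseInverse A B) (hC : IsMoorePenroseInverse A C) : B = C := by
  have hA' := hC.conjTranspose.mul_mul_self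
  have hAB : A * B = A * C :=
    calc A * B = Bᴴ * Aᴴ := by rw [← conjTranspose_mul, hB.isHermitian_mul.eq]
      _ = Bᴴ * (Aᴴ * Cᴴ * Aᴴ) := by rw [hA']
      _ = Bᴴ * Aᴴ * (Cᴴ * Aᴴ) := by simp only [Matrix.mul_assoc]
      _ = A * B * (A * C) := by
        rw [← conjTranspose_mul, ← conjTranspose_mul, hB.isHermitian_mul.eq, hC.isHermitian_mul.eq]
      _ = A * C := by rw [← Matrix.mul_assoc, hB.mul_mul_self]
  have hBA : B * A = C * A :=
    calc B * A = Aᴴ * Bᴴ := by rw [← conjTranspose_mul, hB.isHermitian_mul'.eq]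
      _ = Aᴴ * Cᴴ * Aᴴ * Bᴴ := by rw [hA']
      _ = Aᴴ * Cᴴ * (Aᴴ * Bᴴ) := by simp only [Matrix.mul_assoc]
      _ = C * A * (B * A) := by
        rw [← conjTranspose_mul, ← conjTranspose_mul, hB.isHermitian_mul'.eq,
          hC.isHermitian_mul'.eq]
      _ = C * A := by rw [Matrix.mul_assoc, ← Matrix.mul_assoc A, hB.mul_mul_self]
  calc B = C * A * B := by rw [← hBA, hB.mul_self_mul]
    _ = C := by rw [Matrix.mul_assoc, hAB, ← Matrix.mul_assoc, hC.mul_self_mul]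

theorem submatrix [Fintype m'] [Fintype n'] (h : IsMoorePenroseInverse A B) (e : m' ≃ m)
    (f : n' ≃ n) : IsMoorePenroseInverse (A.submatrix e f) (B.submatrix f e) := by
  refine ⟨?_, ?_, ?_, ?_⟩ <;>
    simp only [submatrix_mul_equiv, IsHermitian, conjTranspose_submatrix, h.mul_mul_self,
      h.mul_self_mul, h.isHermitian_mul.eq, h.isHermitian_mul'.eq]

theorem submatrix_eq_of_submatrix_eq (h : IsMoorePenroseInverse A B)
    {e : m ≃ m} {f : n ≃ n} (hA : A.submatrix e f = A) : B.submatrix f e = B :=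
  (hA ▸ h.submatrix e f).unique h

theorem isHermitian {S T : Matrix n n R} (hS : S.IsHermitian)
    (h : IsMoorePenroseInverse S T) : T.IsHermitian :=
  (hS.eq ▸ h.conjTranspose).unique h

theorem unitary_mul_mul_star [DecidableEq n] {S T U : Matrix n n R}
    (h : IsMoorePenroseInverse S T) (hU : U ∈ unitary (Matrix n n R)) :
    IsMoorePenroseInverse (U * S * star U) (U * T * star U) := by
  have hUU : star U * U = 1 := Unitary.star_mul_self_of_mem hU
  have key : ∀ M N : Matrix n n R, U * M * star U * (U * N * star U) = U * (M * N) * star U := by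
    intro M N
    simp only [Matrix.mul_assoc]; rw [← Matrix.mul_assoc (star U), hUU, Matrix.one_mul]
  refine ⟨?_, ?_, ?_, ?_⟩
  · rw [key, key, h.mul_mul_self]
  · rw [key, key, h.mul_self_mul]
  · rw [key, star_eq_conjTranspose]
    exact isHermitian_mul_mul_conjTranspose U h.isHermitian_mul
  · rw [key, star_eq_conjTranspose]
    exact isHermitian_mul_mul_conjTranspose U h.isHermitian_mul'

end Semiring

/-- The convention `0⁻¹ = 0` is exactly the pseudoinverse of a zero diagonal entry. -/
theorem diagonal [DivisionRing R] [StarRing R] [DecidableEq n] (d : n → R) :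
    IsMoorePenroseInverse (diagonal d) (diagonal d⁻¹) := by
  have star_mul_inv : ∀ a : R, star (a * a⁻¹) = a * a⁻¹ := fun a => by
    rcases eq_or_ne a 0 with rfl | ha <;> simp [*]
  have star_inv_mul : ∀ a : R, star (a⁻¹ * a) = a⁻¹ * a := fun a => by
    rcases eq_or_ne a 0 with rfl | ha <;> simp [*]
  have inv_mul_inv : ∀ a : R, a⁻¹ * a * a⁻¹ = a⁻¹ := fun a => by
    simpa only [inv_inv] using mul_inv_mul_cancel a⁻¹
  refine ⟨?_, ?_, ?_, ?_⟩ <;>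
    simp [IsHermitian, diagonal_conjTranspose, mul_inv_mul_cancel, inv_mul_inv, star_mul_inv,
      star_inv_mul]

theorem of_conjTranspose_mul_self [Ring R] [PartialOrder R] [StarRing R] [StarOrderedRing R]
    [NoZeroDivisors R] [DecidableEq n] {A : Matrix m n R} {T : Matrix n n R}
    (h : IsMoorePenroseInverse (Aᴴ * A) T) : IsMoorePenroseInverse A (T * Aᴴ) := by
  have hS : (Aᴴ * A).IsHermitian := isHermitian_conjTranspose_mul_self A
  have hT : T.IsHermitian := h.isHermitian hS
  have hST : Aᴴ * A * T = T * (Aᴴ * A) := ((hS.commute_iff hT).2 h.isHermitian_mul).eq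
  refine ⟨?_, ?_, ?_, ?_⟩
  · have hA : Aᴴ * A * (T * (Aᴴ * A) - 1) = 0 := by
      rw [Matrix.mul_sub, Matrix.mul_one, ← Matrix.mul_assoc, h.mul_mul_self, sub_self]
    rw [conjTranspose_mul_self_mul_eq_zero, Matrix.mul_sub, Matrix.mul_one, sub_eq_zero] at hA
    simpa only [Matrix.mul_assoc] using hA
  · simpa only [Matrix.mul_assoc] using congrArg (· * Aᴴ) h.mul_self_mul
  · rw [← Matrix.mul_assoc]
    exact isHermitian_mul_mul_conjTranspose A hT
  · rw [Matrix.mul_assoc, ← hST]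
    exact h.isHermitian_mul

end IsMoorePenroseInverse

variable {𝕜 : Type*} [RCLike 𝕜] [DecidableEq n]

theorem IsHermitian.exists_isMoorePenroseInverse {S : Matrix n n 𝕜} (hS : S.IsHermitian) :
    ∃ T, IsMoorePenroseInverse S T := by
  rw [hS.spectral_theorem, Unitary.conjStarAlgAut_apply]
  exact ⟨_, (IsMoorePenroseInverse.diagonal _).unitary_mul_mul_star hS.eigenvectorUnitary.2⟩

open scoped ComplexOrder in
theorem exists_isMoorePenroseInverse (A : Matrix m n 𝕜) : ∃ B, IsMoorePenroseInverse A B :=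
  let ⟨_, hT⟩ := (isHermitian_conjTranspose_mul_self A).exists_isMoorePenroseInverse
  ⟨_, hT.of_conjTranspose_mul_self⟩

end Matrix

section BlockCirculant

variable {G α β R : Type*}

def blockCirculant [Sub G] (X : G → Matrix α β R) : Matrix (G × α) (G × β) R :=
  Matrix.of fun p q => X (p.1 - q.1) p.2 q.2

@[simp]
theorem blockCirculant_apply [Sub G] (X : G → Matrix α β R) (p : G × α) (q : G × β) :
    blockCirculant X p q = X (p.1 - q.1) p.2 q.2 := rfl

theorem blockCirculant_injective [AddGroup G] :
    Function.Injective (blockCirculant : (G → Matrix α β R) → _) := fun X Y h =>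
  funext fun g => Matrix.ext fun i j => by simpa using congr_fun₂ h (g, i) (0, j)

def shiftEquiv [AddGroup G] (α : Type*) (d : G) : G × α ≃ G × α :=
  (Equiv.addRight d).prodCongr (Equiv.refl α)

@[simp]
theorem shiftEquiv_apply [AddGroup G] (d : G) (p : G × α) :
    shiftEquiv α d p = (p.1 + d, p.2) := rfl

theorem blockCirculant_submatrix_shiftEquiv [AddGroup G] (X : G → Matrix α β R) (d : G) :
    (blockCirculant X).submatrix (shiftEquiv α d) (shiftEquiv β d) = blockCirculant X := by
  ext p q
  simp [add_sub_add_right_eq_sub]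

theorem exists_blockCirculant_eq [AddGroup G] (B : Matrix (G × α) (G × β) R)
    (hB : ∀ d, B.submatrix (shiftEquiv α d) (shiftEquiv β d) = B) : ∃ X, blockCirculant X = B := by
  refine ⟨fun g => Matrix.of fun i j => B (g, i) (0, j), ?_⟩
  ext ⟨k, i⟩ ⟨l, j⟩
  simpa using (congr_fun₂ (hB l) (k - l, i) (0, j)).symm

end BlockCirculant

theorem blockCirculant_tMul [NeZero n] {a b c : ℕ} (X : ZMod n → Matrix (Fin a) (Fin b) ℝ)
    (Y : ZMod n → Matrix (Fin b) (Fin c) ℝ) :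
    blockCirculant (tMul X Y) = blockCirculant X * blockCirculant Y := by
  ext ⟨k, i⟩ ⟨l, j⟩
  simp only [blockCirculant_apply, tMul, mul_apply, Matrix.sum_apply, Fintype.sum_prod_type]
  refine Fintype.sum_equiv (Equiv.addRight l) _ _ fun m => ?_
  simp only [Equiv.coe_addRight, sub_add_eq_sub_sub, add_sub_cancel_right, sub_right_comm]

theorem blockCirculant_tTranspose {a b : ℕ} (X : ZMod n → Matrix (Fin a) (Fin b) ℝ) :
    blockCirculant (tTranspose X) = (blockCirculant X)ᵀ := by
  ext p q
  simp [tTranspose]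

/-- Existence of the tensor Moore–Penrose pseudoinverse under the t-product. -/
theorem tMoorePenrose_exists (n I₁ I₂ : ℕ) [NeZero n]
    (X : ZMod n → Matrix (Fin I₁) (Fin I₂) ℝ) :
    ∃ P : ZMod n → Matrix (Fin I₂) (Fin I₁) ℝ,
      tMul (tMul X P) X = X ∧ tMul (tMul P X) P = P ∧
      tTranspose (tMul X P) = tMul X P ∧ tTranspose (tMul P X) = tMul P X := by
  obtain ⟨B, hB⟩ := (blockCirculant X).exists_isMoorePenroseInverse
  have hB_shift : ∀ d, B.submatrix (shiftEquiv _ d) (shiftEquiv _ d) = B := fun d =>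
    hB.submatrix_eq_of_submatrix_eq (blockCirculant_submatrix_shiftEquiv X d)
  obtain ⟨P, rfl⟩ := exists_blockCirculant_eq B hB_shift
  obtain ⟨h₁, h₂, h₃, h₄⟩ := hB
  refine ⟨P, blockCirculant_injective ?_, blockCirculant_injective ?_, blockCirculant_injective ?_,
    blockCirculant_injective ?_⟩ <;>
    simpa only [blockCirculant_tMul, blockCirculant_tTranspose, IsHermitian,
      conjTranspose_eq_transpose_of_trivial]
end

section
/- Fourier-domain criterion for invertibility under the t-product: a tensor X : ZMod n → Matrix (Fin m) (Fin m) ℝ (n ≥ 1) has a t-product inverse (i.e. there exists Y : ZMod n → Matrix (Fin m) (Fin m) ℝ with X ∗ Y = Y ∗ X = I) if and only if for every i : ZMod n the Fourier slice X̂ i is an invertible complex matrix. -/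
/-!
The discrete Fourier transform along the third mode (Mathlib's `ZMod.dft`, of which the Fourier
slices are the values) is a linear bijection that turns the t-product into slicewise matrix
multiplication and the identity tensor into identity slices. Hence a t-inverse gives slicewise
inverses, and conversely the inverse DFT of the slicewise inverses is a complex t-inverse of `X`.
Because `X` is real, taking real parts of the slices of that complex inverse gives a real one.
-/

open Matrix

variable {n : ℕ}

/-- The `i`-th Fourier slice of a third-order real tensor, regarded as a complex
matrix (unnormalized DFT along the third mode). -/
noncomputable def fourierSliceR [NeZero n] {a b : ℕ}
    (X : ZMod n → Matrix (Fin a) (Fin b) ℝ) (i : ZMod n) : Matrix (Fin a) (Fin b) ℂ :=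
  ∑ k : ZMod n,
    (Complex.exp (-2 * Real.pi * Complex.I / n)) ^ ((i * k : ZMod n).val) •
      (X k).map (Complex.ofReal)

open ZMod

def circConv {G R α β γ : Type*} [AddGroup G] [Fintype G] [NonUnitalNonAssocSemiring R]
    [Fintype β] (Φ : G → Matrix α β R) (Ψ : G → Matrix β γ R) : G → Matrix α γ R :=
  fun k => ∑ j, Φ (k - j) * Ψ j

def ofRealSlices {G α β : Type*} (X : G → Matrix α β ℝ) : G → Matrix α β ℂ :=
  fun k => (X k).map Complex.ofReal

def reSlices {G α β : Type*} (Z : G → Matrix α β ℂ) : G → Matrix α β ℝ :=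
  fun k => (Z k).map Complex.re

theorem reSlices_ofRealSlices {G α β : Type*} (X : G → Matrix α β ℝ) :
    reSlices (ofRealSlices X) = X := by
  ext k p q
  simp [reSlices, ofRealSlices]

theorem ofRealSlices_injective {G α β : Type*} :
    Function.Injective (ofRealSlices : (G → Matrix α β ℝ) → G → Matrix α β ℂ) :=
  Function.LeftInverse.injective reSlices_ofRealSlices

theorem ofRealSlices_tId (m : ℕ) : ofRealSlices (tId n m) = Pi.single 0 1 := by
  ext k p q
  by_cases hk : k = 0 <;> simp [ofRealSlices, tId, hk, Matrix.one_apply, apply_ite Complex.ofReal]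

section DFT

variable [NeZero n]

theorem dft_circConv {α β γ : Type*} [Fintype β] (Φ : ZMod n → Matrix α β ℂ)
    (Ψ : ZMod n → Matrix β γ ℂ) (i : ZMod n) :
    𝓕 (circConv Φ Ψ) i = 𝓕 Φ i * 𝓕 Ψ i := by
  simp only [dft_apply, circConv, Finset.smul_sum, Matrix.sum_mul, Matrix.mul_sum]
  rw [Finset.sum_comm]
  refine Finset.sum_congr rfl fun j _ => ?_
  rw [← Equiv.sum_comp (Equiv.addRight j)]
  refine Finset.sum_congr rfl fun l _ => ?_
  rw [Matrix.smul_mul, Matrix.mul_smul, smul_smul, ← AddChar.map_add_eq_mul, Equiv.coe_addRight,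
    add_sub_cancel_right, add_mul, neg_add]

theorem dft_single_zero {E : Type*} [AddCommGroup E] [Module ℂ E] (e : E) :
    𝓕 (Pi.single 0 e : ZMod n → E) = fun _ => e := by
  ext i
  simp [dft_apply, Pi.single_apply]

theorem circConv_eq_single_zero_one_iff {α : Type*} [Fintype α] [DecidableEq α]
    (Φ Ψ : ZMod n → Matrix α α ℂ) :
    circConv Φ Ψ = Pi.single 0 1 ↔ ∀ i, 𝓕 Φ i * 𝓕 Ψ i = 1 := by
  rw [← dft.injective.eq_iff, dft_single_zero, funext_iff]
  simp only [dft_circConv]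

theorem exp_neg_two_pi_I_div_pow_val (j : ZMod n) :
    Complex.exp (-2 * Real.pi * Complex.I / n) ^ j.val = stdAddChar (-j) := by
  have hj : -j = ((-(j.val : ℤ) : ℤ) : ZMod n) := by push_cast; rw [natCast_zmod_val]
  rw [hj, stdAddChar_coe, ← Complex.exp_nat_mul]
  congr 1
  push_cast
  ring

end DFT

section TProduct

variable [NeZero n] {a b c : ℕ}

theorem fourierSliceR_eq_dft (X : ZMod n → Matrix (Fin a) (Fin b) ℝ) :
    fourierSliceR X = 𝓕 (ofRealSlices X) := by
  ext1 i
  simp only [fourierSliceR, dft_apply, exp_neg_two_pi_I_div_pow_val, mul_comm i, ofRealSlices]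

theorem ofRealSlices_tMul (X : ZMod n → Matrix (Fin a) (Fin b) ℝ)
    (Y : ZMod n → Matrix (Fin b) (Fin c) ℝ) :
    ofRealSlices (tMul X Y) = circConv (ofRealSlices X) (ofRealSlices Y) := by
  ext k p q
  simp [ofRealSlices, tMul, circConv, Matrix.sum_apply, Matrix.mul_apply]

theorem reSlices_circConv_ofRealSlices_left (X : ZMod n → Matrix (Fin a) (Fin b) ℝ)
    (Z : ZMod n → Matrix (Fin b) (Fin c) ℂ) :
    reSlices (circConv (ofRealSlices X) Z) = tMul X (reSlices Z) := by
  ext k p q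
  simp [reSlices, ofRealSlices, tMul, circConv, Matrix.sum_apply, Matrix.mul_apply,
    Complex.re_sum]

theorem reSlices_circConv_ofRealSlices_right (Z : ZMod n → Matrix (Fin a) (Fin b) ℂ)
    (X : ZMod n → Matrix (Fin b) (Fin c) ℝ) :
    reSlices (circConv Z (ofRealSlices X)) = tMul (reSlices Z) X := by
  ext k p q
  simp [reSlices, ofRealSlices, tMul, circConv, Matrix.sum_apply, Matrix.mul_apply,
    Complex.re_sum]

theorem tMul_eq_tId_iff {m : ℕ} (X Y : ZMod n → Matrix (Fin m) (Fin m) ℝ) :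
    tMul X Y = tId n m ↔ ∀ i, fourierSliceR X i * fourierSliceR Y i = 1 := by
  rw [← ofRealSlices_injective.eq_iff, ofRealSlices_tMul, ofRealSlices_tId,
    circConv_eq_single_zero_one_iff, fourierSliceR_eq_dft, fourierSliceR_eq_dft]

end TProduct

/-- Fourier-domain criterion for invertibility under the t-product: a tensor has
a t-product inverse iff every Fourier slice is an invertible complex matrix. -/
theorem tInvertible_iff_fourierSlices_invertible (n m : ℕ) [NeZero n]
    (X : ZMod n → Matrix (Fin m) (Fin m) ℝ) :
    (∃ Y : ZMod n → Matrix (Fin m) (Fin m) ℝ,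
        tMul X Y = tId n m ∧ tMul Y X = tId n m) ↔
      ∀ i : ZMod n, IsUnit (fourierSliceR X i) := by
  constructor
  · rintro ⟨Y, hXY, hYX⟩ i
    exact ⟨⟨_, _, (tMul_eq_tId_iff X Y).1 hXY i, (tMul_eq_tId_iff Y X).1 hYX i⟩, rfl⟩
  · intro hX
    set Z := 𝓕⁻ fun i => Ring.inverse (fourierSliceR X i)
    have hZ : 𝓕 Z = fun i => Ring.inverse (fourierSliceR X i) := dft.apply_symm_apply _
    have hXZ : circConv (ofRealSlices X) Z = Pi.single 0 1 := by
      rw [circConv_eq_single_zero_one_iff, hZ, ← fourierSliceR_eq_dft]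
      exact fun i => Ring.mul_inverse_cancel _ (hX i)
    have hZX : circConv Z (ofRealSlices X) = Pi.single 0 1 := by
      rw [circConv_eq_single_zero_one_iff, hZ, ← fourierSliceR_eq_dft]
      exact fun i => Ring.inverse_mul_cancel _ (hX i)
    refine ⟨reSlices Z, ?_, ?_⟩
    · rw [← reSlices_circConv_ofRealSlices_left, hXZ, ← ofRealSlices_tId, reSlices_ofRealSlices]
    · rw [← reSlices_circConv_ofRealSlices_right, hZX, ← ofRealSlices_tId, reSlices_ofRealSlices]
end
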